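/- Let f : ℝⁿ → ℂ be continuous and 1-periodic, and let (g_m) be a sequence of continuous 1-periodic functions on ℝⁿ that is uniformly bounded (∃ M, ∀ m x, |g_m(x)| ≤ M) and converges pointwise to a function g. If (ε_m) is a sequence of positive reals with ε_m → 0, then lim_{m→∞} ε_m^{n/2} ∫_{ℝⁿ} e^{-π ε_m |x|²} f(x) g_m(x) dx = ∫_{[0,1]ⁿ} f(x) g(x) dx. -/

import Mathlib

/-!
Periodizing the Gaussian turns the integral over `ℝⁿ` into an integral over the unit cube: for
`1`-periodic `h`,
`ε^{n/2} ∫ e^{-πε|x|²} h(x) dx = ∫_{[0,1]ⁿ} (∏ᵢ θ_ε(xᵢ)) h(x) dx` with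
`θ_ε(t) = √ε ∑_{j ∈ ℤ} e^{-πε(t+j)²}`.
By Poisson summation (the Jacobi theta transformation) `θ_ε(t) = ∑_j e^{-πj²/ε} e^{2πijt}`, whose
`j = 0` term is `1`, so `|θ_ε(t) - 1| ≤ θ_ε(0) - 1 → 0` as `ε → 0⁺`. Hence the weight `∏ᵢ θ_ε(xᵢ)`
tends to `1` pointwise and stays bounded, and dominated convergence on the cube gives the limit.
-/

open MeasureTheory Real Filter Topology
open Complex (I)

theorem norm_tsum_sub_le_tsum_norm_sub {ι E : Type*} [NormedAddCommGroup E] [CompleteSpace E]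
    {f : ι → E} (hf : Summable (‖f ·‖)) (i : ι) :
    ‖∑' j, f j - f i‖ ≤ ∑' j, ‖f j‖ - ‖f i‖ := by
  classical
  rw [hf.of_norm.tsum_eq_add_tsum_ite i, hf.tsum_eq_add_tsum_ite i, add_sub_cancel_left,
    add_sub_cancel_left]
  refine (norm_tsum_le_tsum_norm ?_).trans_eq (tsum_congr fun j => ?_)
  · exact hf.of_nonneg_of_le (fun _ => norm_nonneg _) fun j => by split_ifs <;> simp
  · split_ifs <;> simp

theorem hasSum_prod_pi_of_nonneg {β : Type*} {n : ℕ} {f : Fin n → β → ℝ}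
    (hf0 : ∀ i j, 0 ≤ f i j) (hf : ∀ i, Summable (f i)) :
    HasSum (fun k : Fin n → β => ∏ i, f i (k i)) (∏ i, ∑' j, f i j) := by
  induction n with
  | zero => simp
  | succ n ih =>
    set g : Fin n → β → ℝ := fun i => f i.succ
    have htail : HasSum (fun k : Fin n → β => ∏ i, g i (k i)) (∏ i, ∑' j, g i j) :=
      ih (fun i => hf0 i.succ) fun i => hf i.succ
    have hsum := (hf 0).mul_of_nonneg htail.summable (hf0 0) fun k =>
      Finset.prod_nonneg fun i _ => hf0 i.succ (k i)
    have hprod := (hf 0).hasSum.mul htail hsum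
    have hcons : (fun k => ∏ i, f i (k i)) ∘ Fin.consEquiv (fun _ => β) =
        fun p => f 0 p.1 * ∏ i, g i (p.2 i) := by
      ext p
      simp [g, Fin.prod_univ_succ]
    rw [← (Fin.consEquiv fun _ => β).hasSum_iff, hcons, Fin.prod_univ_succ]
    exact hprod

theorem MeasureTheory.IsAddFundamentalDomain.integral_eq_setIntegral_tsum {G α E : Type*}
    [AddGroup G] [Countable G] [AddAction G α] [MeasurableSpace α] [MeasurableConstVAdd G α]
    {μ : Measure α} [VAddInvariantMeasure G α μ] {s : Set α} [NormedAddCommGroup E]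
    [NormedSpace ℝ E] (h : IsAddFundamentalDomain G s μ) {F : α → E} (hF : Integrable F μ) :
    ∫ x, F x ∂μ = ∫ x in s, ∑' g : G, F (g +ᵥ x) ∂μ := by
  have hmeas (g : G) : AEStronglyMeasurable (fun x => F (g +ᵥ x)) (μ.restrict s) :=
    ((measurePreserving_vadd g μ).integrable_comp_of_integrable hF).aestronglyMeasurable.restrict
  rw [h.integral_eq_tsum'' F hF, integral_tsum hmeas]
  rw [← h.lintegral_eq_tsum'' fun x => ‖F x‖ₑ]
  exact hF.2.ne

theorem integral_eq_setIntegral_unitCube_tsum {ι E : Type*} [Fintype ι] [NormedAddCommGroup E]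
    [NormedSpace ℝ E] {F : (ι → ℝ) → E} (hF : Integrable F) :
    ∫ x, F x = ∫ x in Set.Icc 0 1, ∑' k : ι → ℤ, F (x + fun i => (k i : ℝ)) := by
  classical
  let L := (Submodule.span ℤ (Set.range (Pi.basisFun ℝ ι))).toAddSubgroup
  let e : (ι → ℤ) ≃ L := ((Pi.basisFun ℝ ι).restrictScalars ℤ).equivFun.symm.toEquiv
  have : Countable L := Countable.of_equiv _ e
  have h := ZSpan.isAddFundamentalDomain' (Pi.basisFun ℝ ι) volume
  rw [ZSpan.fundamentalDomain_pi_basisFun] at h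
  have hcube : (Set.univ.pi fun _ => Set.Ico (0 : ℝ) 1) =ᵐ[volume] Set.Icc (0 : ι → ℝ) 1 :=
    Measure.univ_pi_Ico_ae_eq_Icc
  rw [h.integral_eq_setIntegral_tsum hF, setIntegral_congr_set hcube]
  congr 1 with x
  rw [← e.tsum_eq]
  congr 1 with k
  rw [Submodule.vadd_def, vadd_eq_add, add_comm]
  congr 2 with i
  simp [e, Pi.basisFun_apply, Pi.single_apply]

theorem exists_norm_le_of_continuous_of_periodic {ι E : Type*} [Fintype ι] [NormedAddCommGroup E]
    {f : (ι → ℝ) → E} (hf : Continuous f)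
    (hper : ∀ (x : ι → ℝ) (k : ι → ℤ), f (x + fun i => (k i : ℝ)) = f x) :
    ∃ C, ∀ x, ‖f x‖ ≤ C := by
  obtain ⟨C, hC⟩ := isCompact_univ_pi (fun _ => isCompact_Icc (a := (0 : ℝ)) (b := 1))
    |>.exists_bound_of_continuousOn hf.continuousOn
  refine ⟨C, fun x => ?_⟩
  have hx : ((fun i => Int.fract (x i)) + fun i => ((⌊x i⌋ : ℤ) : ℝ)) = x :=
    funext fun i => Int.fract_add_floor (x i)
  rw [← hx, hper]
  exact hC _ fun i _ => ⟨Int.fract_nonneg _, (Int.fract_lt_one _).le⟩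

theorem summable_exp_neg_mul_add_int_sq {a : ℝ} (ha : 0 < a) (x : ℝ) :
    Summable fun j : ℤ => rexp (-(a * (x + j) ^ 2)) := by
  have hτ : 0 < (I * (a / π : ℝ)).im := by simpa using div_pos ha pi_pos
  refine (((summable_jacobiTheta₂_term_iff (I * (a * x / π : ℝ)) _).mpr hτ).norm.mul_left
    (rexp (-(a * x ^ 2)))).congr fun j => ?_
  rw [norm_jacobiTheta₂_term, ← Real.exp_add]
  simp only [Complex.mul_im, Complex.I_re, Complex.I_im, Complex.ofReal_re, Complex.ofReal_im]
  congr 1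
  field_simp
  ring

theorem integrable_exp_neg_mul_sum_sq {ι : Type*} [Fintype ι] {a : ℝ} (ha : 0 < a) :
    Integrable fun x : ι → ℝ => rexp (-(a * ∑ i, x i ^ 2)) := by
  simp_rw [Finset.mul_sum, ← Finset.sum_neg_distrib, Real.exp_sum, ← neg_mul]
  exact Integrable.fintype_prod (f := fun _ t => rexp (-a * t ^ 2)) fun _ =>
    integrable_exp_neg_mul_sq ha

noncomputable def periodizedGaussian (e x : ℝ) : ℝ := √e * ∑' j : ℤ, rexp (-(π * e * (x + j) ^ 2))

theorem one_div_inv_cpow_one_half {e : ℝ} (he : 0 ≤ e) :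
    1 / ((e : ℂ)⁻¹) ^ (1 / 2 : ℂ) = √e := by
  rw [← Complex.ofReal_inv, ← Complex.ofReal_one, ← Complex.ofReal_ofNat, ← Complex.ofReal_div,
    ← Complex.ofReal_cpow (inv_nonneg.mpr he), ← Complex.ofReal_div, ← Real.sqrt_eq_rpow,
    Real.sqrt_inv, one_div, inv_inv]

theorem ofReal_periodizedGaussian {e : ℝ} (he : 0 < e) (x : ℝ) :
    (periodizedGaussian e x : ℂ) = jacobiTheta₂ x (I / e) := by
  have ha : 0 < ((e : ℂ)⁻¹).re := by simpa using he
  rw [← jacobiTheta₂_neg_left, jacobiTheta₂,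
    tsum_congr fun n => show jacobiTheta₂_term n (-x) (I / e) =
      Complex.exp (-π * (e : ℂ)⁻¹ * n ^ 2 + 2 * π * -(I * x) * n) by
        rw [jacobiTheta₂_term]; congr 1; ring_nf; rw [Complex.I_sq]; ring,
    Complex.tsum_exp_neg_quadratic ha, one_div_inv_cpow_one_half he.le, periodizedGaussian,
    Complex.ofReal_mul, Complex.ofReal_tsum]
  congr 1
  refine tsum_congr fun j => ?_
  rw [Complex.ofReal_exp]
  congr 1
  push_cast
  field_simp
  ring_nf
  simp only [Complex.I_sq, Complex.I_pow_four]
  ring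

theorem periodizedGaussian_zero {e : ℝ} (he : 0 < e) :
    periodizedGaussian e 0 = ∑' n : ℤ, rexp (-π / e * n ^ 2) := by
  have h := Real.tsum_exp_neg_mul_int_sq he
  simp only [neg_mul] at h
  simp only [periodizedGaussian, zero_add]
  rw [h, ← mul_assoc, Real.sqrt_eq_rpow, mul_one_div_cancel (by positivity), one_mul]

theorem norm_jacobiTheta₂_term_ofReal_I_div (n : ℤ) (x : ℝ) {e : ℝ} (he : e ≠ 0) :
    ‖jacobiTheta₂_term n x (I / e)‖ = rexp (-π / e * n ^ 2) := by
  rw [norm_jacobiTheta₂_term]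
  simp only [neg_mul, Complex.div_ofReal_im, Complex.I_im, one_div, Complex.ofReal_im, mul_zero,
    sub_zero, exp_eq_exp]
  field_simp

theorem abs_periodizedGaussian_sub_one_le {e : ℝ} (he : 0 < e) (x : ℝ) :
    |periodizedGaussian e x - 1| ≤ periodizedGaussian e 0 - 1 := by
  have hτ : 0 < (I / e).im := by simpa using he
  have h := norm_tsum_sub_le_tsum_norm_sub ((summable_jacobiTheta₂_term_iff x _).mpr hτ).norm 0
  simp only [norm_jacobiTheta₂_term_ofReal_I_div _ _ he.ne'] at h
  rw [← jacobiTheta₂, ← ofReal_periodizedGaussian he, ← periodizedGaussian_zero he] at h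
  simpa [jacobiTheta₂_term, ← Complex.ofReal_one, ← Complex.ofReal_sub] using h

theorem periodizedGaussian_nonneg (e x : ℝ) : 0 ≤ periodizedGaussian e x :=
  mul_nonneg (Real.sqrt_nonneg e) (tsum_nonneg fun _ => (Real.exp_pos _).le)

theorem periodizedGaussian_le_periodizedGaussian_zero {e : ℝ} (he : 0 < e) (x : ℝ) :
    periodizedGaussian e x ≤ periodizedGaussian e 0 := by
  linarith [le_abs_self (periodizedGaussian e x - 1), abs_periodizedGaussian_sub_one_le he x]

theorem continuous_periodizedGaussian {e : ℝ} (he : 0 < e) :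
    Continuous (periodizedGaussian e) := by
  have hτ : 0 < (I / e).im := by simpa using he
  have : Continuous fun x : ℝ => (jacobiTheta₂ x (I / e)).re :=
    Complex.continuous_re.comp <| continuous_iff_continuousAt.mpr fun x =>
      (differentiableAt_jacobiTheta₂_fst (x : ℂ) hτ).continuousAt.comp
        Complex.continuous_ofReal.continuousAt
  simpa [← ofReal_periodizedGaussian he] using this

theorem tendsto_periodizedGaussian_zero :
    Tendsto (fun e => periodizedGaussian e 0) (𝓝[>] 0) (𝓝 1) := by
  have hlim (n : ℤ) : Tendsto (fun e => rexp (-π / e * n ^ 2)) (𝓝[>] 0)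
      (𝓝 (if n = 0 then 1 else 0)) := by
    split_ifs with hn
    · simp [hn]
    · refine Real.tendsto_exp_atBot.comp ?_
      simp_rw [div_eq_mul_inv]
      exact (tendsto_inv_nhdsGT_zero.const_mul_atTop_of_neg (neg_neg_of_pos pi_pos)).atBot_mul_const
        (by positivity)
  have hbound : ∀ᶠ e in 𝓝[>] (0 : ℝ), ∀ n : ℤ,
      ‖rexp (-π / e * n ^ 2)‖ ≤ rexp (-(π * (0 + n) ^ 2)) := by
    filter_upwards [Ioc_mem_nhdsGT zero_lt_one] with e ⟨he0, he1⟩ n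
    rw [Real.norm_of_nonneg (Real.exp_pos _).le, Real.exp_le_exp, zero_add, neg_div, neg_mul,
      neg_le_neg_iff, div_mul_eq_mul_div]
    exact le_div_self (by positivity) he0 he1
  have h := tendsto_tsum_of_dominated_convergence (summable_exp_neg_mul_add_int_sq pi_pos 0) hlim
    hbound
  rw [tsum_ite_eq] at h
  exact h.congr' (eventually_nhdsWithin_of_forall fun e he => (periodizedGaussian_zero he).symm)

theorem tendsto_periodizedGaussian (x : ℝ) :
    Tendsto (fun e => periodizedGaussian e x) (𝓝[>] 0) (𝓝 1) := by
  rw [tendsto_iff_norm_sub_tendsto_zero]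
  refine squeeze_zero' (Eventually.of_forall fun e => norm_nonneg _) ?_
    (by simpa using tendsto_periodizedGaussian_zero.sub_const 1)
  filter_upwards [self_mem_nhdsWithin] with e he
  exact abs_periodizedGaussian_sub_one_le he x

theorem tendsto_prod_periodizedGaussian {ι : Type*} [Fintype ι] (x : ι → ℝ) :
    Tendsto (fun e => ∏ i, periodizedGaussian e (x i)) (𝓝[>] 0) (𝓝 1) := by
  simpa using tendsto_finsetProd _ fun i _ => tendsto_periodizedGaussian (x i)

theorem abs_prod_periodizedGaussian_le {ι : Type*} [Fintype ι] {e : ℝ} (he : 0 < e)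
    (x : ι → ℝ) :
    |∏ i, periodizedGaussian e (x i)| ≤ periodizedGaussian e 0 ^ Fintype.card ι := by
  rw [abs_of_nonneg (Finset.prod_nonneg fun i _ => periodizedGaussian_nonneg e (x i)),
    ← Finset.card_univ, ← Finset.prod_const]
  exact Finset.prod_le_prod (fun i _ => periodizedGaussian_nonneg e (x i)) fun i _ =>
    periodizedGaussian_le_periodizedGaussian_zero he (x i)

theorem hasSum_rpow_mul_exp_neg_mul_sum_add_int_sq {n : ℕ} {e : ℝ} (he : 0 < e)
    (x : Fin n → ℝ) :
    HasSum (fun k : Fin n → ℤ => e ^ ((n : ℝ) / 2) * rexp (-(π * e * ∑ i, (x i + k i) ^ 2)))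
      (∏ i, periodizedGaussian e (x i)) := by
  have hpow : e ^ ((n : ℝ) / 2) = ∏ _i : Fin n, √e := by
    rw [Finset.prod_const, Finset.card_univ, Fintype.card_fin, Real.sqrt_eq_rpow,
      ← Real.rpow_natCast, ← Real.rpow_mul he.le, one_div_mul_eq_div]
  simp_rw [hpow, Finset.mul_sum, ← Finset.sum_neg_distrib, Real.exp_sum,
    ← Finset.prod_mul_distrib]
  convert hasSum_prod_pi_of_nonneg (f := fun i (j : ℤ) => √e * rexp (-(π * e * (x i + j) ^ 2)))
    (fun i j => by positivity) fun i =>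
      (summable_exp_neg_mul_add_int_sq (mul_pos pi_pos he) (x i)).mul_left √e using 2 with i
  rw [tsum_mul_left, periodizedGaussian]

theorem integral_exp_neg_mul_sum_sq_mul_of_periodic {n : ℕ} {e : ℝ} (he : 0 < e)
    {h : (Fin n → ℝ) → ℂ} (hmeas : AEStronglyMeasurable h) {C : ℝ} (hC : ∀ x, ‖h x‖ ≤ C)
    (hper : ∀ (x : Fin n → ℝ) (k : Fin n → ℤ), h (x + fun i => (k i : ℝ)) = h x) :
    ((e ^ ((n : ℝ) / 2) : ℝ) : ℂ) * ∫ x, (rexp (-(π * e * ∑ i, x i ^ 2)) : ℂ) * h x =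
      ∫ x in Set.Icc 0 1, (∏ i, periodizedGaussian e (x i) : ℝ) * h x := by
  have hint : Integrable fun x : Fin n → ℝ => (rexp (-(π * e * ∑ i, x i ^ 2)) : ℂ) * h x :=
    (integrable_exp_neg_mul_sum_sq (mul_pos pi_pos he)).ofReal.mul_bdd hmeas
      (Eventually.of_forall hC)
  rw [← integral_const_mul, integral_eq_setIntegral_unitCube_tsum (hint.const_mul _)]
  congr 1 with x
  simp_rw [hper, ← mul_assoc, ← Complex.ofReal_mul, Pi.add_apply]
  rw [tsum_mul_right, ← Complex.ofReal_tsum,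
    (hasSum_rpow_mul_exp_neg_mul_sum_add_int_sq he x).tsum_eq]

/-- Gaussian averaging lemma with a uniformly bounded pointwise-convergent sequence
of continuous 1-periodic functions `g_m → g`. -/
theorem stmt1 {n : ℕ} (f : (Fin n → ℝ) → ℂ) (hf : Continuous f)
    (hper : ∀ (x : Fin n → ℝ) (k : Fin n → ℤ), f (x + fun i => (k i : ℝ)) = f x)
    (g : ℕ → (Fin n → ℝ) → ℂ) (hgcont : ∀ m, Continuous (g m))
    (hgper : ∀ m (x : Fin n → ℝ) (k : Fin n → ℤ), g m (x + fun i => (k i : ℝ)) = g m x)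
    (hgbd : ∃ M : ℝ, ∀ m x, ‖g m x‖ ≤ M)
    (glim : (Fin n → ℝ) → ℂ)
    (hglim : ∀ x, Tendsto (fun m => g m x) atTop (nhds (glim x)))
    (ε : ℕ → ℝ) (hεpos : ∀ m, 0 < ε m) (hε0 : Tendsto ε atTop (nhds (0 : ℝ))) :
    Tendsto (fun m : ℕ =>
        ((ε m ^ ((n : ℝ) / 2) : ℝ) : ℂ) *
          ∫ x : Fin n → ℝ, ((Real.exp (-(π * ε m * ∑ i, x i ^ 2)) : ℝ) : ℂ) * f x * g m x)
      atTop (nhds (∫ x in Set.Icc (0 : Fin n → ℝ) 1, f x * glim x)) := by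
  obtain ⟨M, hM⟩ := hgbd
  obtain ⟨C, hC⟩ := exists_norm_le_of_continuous_of_periodic hf hper
  have hε : Tendsto ε atTop (𝓝[>] 0) :=
    tendsto_nhdsWithin_iff.mpr ⟨hε0, Eventually.of_forall hεpos⟩
  have hfg (m : ℕ) (x : Fin n → ℝ) : ‖f x * g m x‖ ≤ C * M := norm_mul_le_of_le (hC x) (hM m x)
  have hcube (m : ℕ) := integral_exp_neg_mul_sum_sq_mul_of_periodic (hεpos m)
    (h := fun x => f x * g m x) (hf.mul (hgcont m)).aestronglyMeasurable (hfg m)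
    fun x k => by simp only [hper, hgper]
  simp_rw [mul_assoc _ (f _), hcube]
  refine tendsto_integral_filter_of_dominated_convergence (fun _ => 2 ^ n * (C * M)) ?_ ?_
    (integrableOn_const measure_Icc_lt_top.ne) (ae_of_all _ fun x => ?_)
  · refine Eventually.of_forall fun m => Continuous.aestronglyMeasurable ?_
    exact (Complex.continuous_ofReal.comp (continuous_finsetProd _ fun i _ =>
      (continuous_periodizedGaussian (hεpos m)).comp (continuous_apply i))).mul
      (hf.mul (hgcont m))
  · filter_upwards [hε.eventually (tendsto_periodizedGaussian_zero.eventually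
      (gt_mem_nhds one_lt_two))] with m hm
    refine ae_of_all _ fun x => norm_mul_le_of_le ?_ (hfg m x)
    rw [Complex.norm_real, Real.norm_eq_abs]
    refine (abs_prod_periodizedGaussian_le (hεpos m) x).trans ?_
    simpa using pow_le_pow_left₀ (periodizedGaussian_nonneg _ _) hm.le n
  · simpa using (Complex.continuous_ofReal.tendsto 1).comp
      ((tendsto_prod_periodizedGaussian x).comp hε) |>.mul (tendsto_const_nhds.mul (hglim x))
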